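/- arXiv:2102.02468 — 2 statements merged into one kernel-verified Lean document; each statement's English description precedes it below -/
import Mathlib

section
/- If Z and N are independent real-valued random variables with N independent of (X, Z), and E(Z^k | X) = E(Z^k) almost surely for all k = 1, ..., K-1, then for Y = Z + N one has E(Y^k | X) = E(Y^k) almost surely for all k = 1, ..., K-1. -/
open MeasureTheory ProbabilityTheory

/-- If the conditional moments of `Z` given `X` up to order `K-1` equal the unconditional
moments a.s., and `N` is independent of `(X, Z)`, then the same holds for `Y = Z + N`. -/
theorem balanced_moments_of_add_indep_noise
    {Ω S : Type*} [MeasurableSpace Ω] [MeasurableSpace S]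
    (μ : Measure Ω) [IsProbabilityMeasure μ]
    (X : Ω → S) (Z N : Ω → ℝ) (K : ℕ)
    (hX : Measurable X) (hZ : Measurable Z) (hN : Measurable N)
    (hZN : IndepFun Z N μ)
    (hindep : IndepFun (fun ω => (X ω, Z ω)) N μ)
    (hZint : ∀ k ≤ K - 1, Integrable (fun ω => Z ω ^ k) μ)
    (hNint : ∀ k ≤ K - 1, Integrable (fun ω => N ω ^ k) μ)
    (hbal : ∀ k, 1 ≤ k → k ≤ K - 1 →
      μ[fun ω => Z ω ^ k | MeasurableSpace.comap X inferInstance]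
        =ᵐ[μ] fun _ => ∫ ω, Z ω ^ k ∂μ) :
    ∀ k, 1 ≤ k → k ≤ K - 1 →
      μ[fun ω => (Z ω + N ω) ^ k | MeasurableSpace.comap X inferInstance]
        =ᵐ[μ] fun _ => ∫ ω, (Z ω + N ω) ^ k ∂μ := by
  intro k hk1 hkK
  have hm := hX.comap_le
  haveI : IsFiniteMeasure (μ.trim hm) := isFiniteMeasure_trim hm
  -- integrability of each term in the binomial expansion
  have hterm_int : ∀ j ∈ Finset.range (k + 1),
      Integrable (fun ω => Z ω ^ j * N ω ^ (k - j)) μ := by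
    intro j hj
    have hj' : j ≤ K - 1 := le_trans (Nat.le_of_lt_succ (Finset.mem_range.mp hj)) hkK
    have hkj : k - j ≤ K - 1 := le_trans (Nat.sub_le _ _) hkK
    exact (hZN.comp (measurable_id.pow_const j) (measurable_id.pow_const (k - j))).integrable_mul
      (hZint j hj') (hNint (k - j) hkj)
  -- set integrals of powers of Z over m-measurable sets
  have hZset : ∀ (A : Set Ω), MeasurableSet[MeasurableSpace.comap X inferInstance] A → ∀ j, j ≤ K - 1 →
      ∫ ω in A, Z ω ^ j ∂μ = (μ A).toReal * ∫ ω, Z ω ^ j ∂μ := by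
    intro A hA j hj
    rcases Nat.eq_zero_or_pos j with rfl | hj1
    · simp; rfl
    · rw [← setIntegral_condExp hm (hZint j hj) hA,
        integral_congr_ae (ae_restrict_of_ae (hbal j hj1 hj)), setIntegral_const, smul_eq_mul, Measure.real]
  -- set integrals of each product term over m-measurable sets
  have hprod : ∀ (A : Set Ω), MeasurableSet[MeasurableSpace.comap X inferInstance] A → ∀ j ∈ Finset.range (k + 1),
      ∫ ω in A, Z ω ^ j * N ω ^ (k - j) ∂μ
        = (μ A).toReal * ((∫ ω, Z ω ^ j ∂μ) * ∫ ω, N ω ^ (k - j) ∂μ) := by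
    intro A hA j hj
    have hj' : j ≤ K - 1 := le_trans (Nat.le_of_lt_succ (Finset.mem_range.mp hj)) hkK
    have hkj : k - j ≤ K - 1 := le_trans (Nat.sub_le _ _) hkK
    obtain ⟨B, hB, rfl⟩ := hA
    have hAmeas : MeasurableSet (X ⁻¹' B) := hX hB
    set f1 : Ω → ℝ := (X ⁻¹' B).indicator (fun ω => Z ω ^ j) with hf1
    set f2 : Ω → ℝ := fun ω => N ω ^ (k - j) with hf2
    have hφ : Measurable (fun p : S × ℝ => B.indicator (fun _ => (1 : ℝ)) p.1 * p.2 ^ j) :=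
      ((measurable_const.indicator hB).comp measurable_fst).mul (measurable_snd.pow_const j)
    have hfeq : (fun ω => (fun p : S × ℝ => B.indicator (fun _ => (1 : ℝ)) p.1 * p.2 ^ j)
        ((X ω, Z ω))) = f1 := by
      funext ω
      by_cases h : X ω ∈ B <;> simp [hf1, Set.indicator, h]
    have hind12 : IndepFun f1 f2 μ := by
      have := hindep.comp hφ (measurable_id.pow_const (k - j))
      rwa [Function.comp_def, hfeq] at this
    have hf1int : Integrable f1 μ := (hZint j hj').indicator hAmeas
    have hf2int : Integrable f2 μ := hNint (k - j) hkj
    have key : ∫ ω, f1 ω * f2 ω ∂μ = (∫ ω, f1 ω ∂μ) * ∫ ω, f2 ω ∂μ :=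
      hind12.integral_fun_mul_eq_mul_integral hf1int.1 hf2int.1
    have hindic : (fun ω => f1 ω * f2 ω)
        = (X ⁻¹' B).indicator (fun ω => Z ω ^ j * N ω ^ (k - j)) := by
      funext ω
      by_cases h : ω ∈ X ⁻¹' B <;> simp [hf1, hf2, Set.indicator, h]
    rw [← integral_indicator hAmeas, ← hindic, key, hf1, integral_indicator hAmeas,
      hZset _ ⟨B, hB, rfl⟩ j hj', mul_assoc]
  -- set integral of (Z+N)^k over m-measurable sets
  have hAint : ∀ (A : Set Ω), MeasurableSet[MeasurableSpace.comap X inferInstance] A →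
      ∫ ω in A, (Z ω + N ω) ^ k ∂μ
        = (μ A).toReal * ∑ j ∈ Finset.range (k + 1),
            (∫ ω, Z ω ^ j ∂μ) * (∫ ω, N ω ^ (k - j) ∂μ) * (k.choose j : ℝ) := by
    intro A hA
    have hexp : (fun ω => (Z ω + N ω) ^ k)
        = fun ω => ∑ j ∈ Finset.range (k + 1), Z ω ^ j * N ω ^ (k - j) * (k.choose j : ℝ) :=
      funext fun ω => add_pow _ _ _
    rw [hexp, integral_finset_sum _ (fun j hj => ((hterm_int j hj).mul_const _).integrableOn),
      Finset.mul_sum]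
    refine Finset.sum_congr rfl fun j hj => ?_
    rw [integral_mul_const, hprod A hA j hj]
    ring
  have hf : Integrable (fun ω => (Z ω + N ω) ^ k) μ := by
    have hexp : (fun ω => (Z ω + N ω) ^ k)
        = fun ω => ∑ j ∈ Finset.range (k + 1), Z ω ^ j * N ω ^ (k - j) * (k.choose j : ℝ) :=
      funext fun ω => add_pow _ _ _
    rw [hexp]
    exact integrable_finset_sum _ fun j hj => (hterm_int j hj).mul_const _
  have hT : ∫ ω, (Z ω + N ω) ^ k ∂μ
      = ∑ j ∈ Finset.range (k + 1),
          (∫ ω, Z ω ^ j ∂μ) * (∫ ω, N ω ^ (k - j) ∂μ) * (k.choose j : ℝ) := by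
    have := hAint Set.univ MeasurableSet.univ
    simpa [measure_univ] using this
  refine (ae_eq_condExp_of_forall_setIntegral_eq hm hf
    (fun s _ hs => (integrableOn_const hs.ne))
    (fun s hs hμs => ?_) (StronglyMeasurable.aestronglyMeasurable stronglyMeasurable_const)).symm
  rw [setIntegral_const, smul_eq_mul, hAint s hs, hT, Measure.real]
end

section
/- For Z = w_H(X ⊕ (C ⊗ M)) + w_H(M) with X, M independent and M uniform on 𝔽_16, C = 1, the first-order protection holds: E(Z | X) = E(Z) for all values of X (i.e., Var(E(Z|X)) = 0), but Var(E(Z²|X)) = 1 ≠ 0, so the high-order correlation immunity order is K = 2. -/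
/-- Hamming weight of the 4-bit representation of a natural number. -/
def hammingWeight4 (n : ℕ) : ℕ :=
  ((Finset.range 4).filter fun i => n.testBit i).card

/-- The leakage `Z = w_H(X ⊕ (C ⊗ M)) + w_H(M)` for the two-share masking over `𝔽₁₆`
with `C = 1` (so `C ⊗ M = M` and field addition is bitwise XOR), as a function of the
values `x` of the key chunk `X` and `m` of the uniform mask `M`. -/
def leakZ (x m : Fin 16) : ℝ :=
  (hammingWeight4 (x.val ^^^ m.val) : ℝ) + (hammingWeight4 m.val : ℝ)

private def sumZ (x : Fin 16) : ℕ := ∑ m : Fin 16, (hammingWeight4 (x.val ^^^ m.val) + hammingWeight4 m.val)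

private def sumZ2 (x : Fin 16) : ℕ := ∑ m : Fin 16, (hammingWeight4 (x.val ^^^ m.val) + hammingWeight4 m.val) ^ 2

private lemma leakZ_eq (x m : Fin 16) :
    leakZ x m = ((hammingWeight4 (x.val ^^^ m.val) + hammingWeight4 m.val : ℕ) : ℝ) := by
  simp [leakZ]

private lemma sum_leakZ (x : Fin 16) : ∑ m : Fin 16, leakZ x m = 64 := by
  have h : ∑ m : Fin 16, leakZ x m = ((sumZ x : ℕ) : ℝ) := by
    simp only [leakZ_eq, sumZ, Nat.cast_sum]
  rw [h, show sumZ x = 64 from by fin_cases x <;> decide]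
  norm_num

private lemma sum_leakZ2 (x : Fin 16) : ∑ m : Fin 16, (leakZ x m) ^ 2 = ((sumZ2 x : ℕ) : ℝ) := by
  simp only [leakZ_eq, sumZ2, Nat.cast_sum, Nat.cast_pow]

private lemma sumA : ∑ x : Fin 16, ((sumZ2 x : ℕ) : ℝ) = 4608 := by
  rw [← Nat.cast_sum, show (∑ x : Fin 16, sumZ2 x) = 4608 from by decide]
  norm_num

private lemma sumB : ∑ x : Fin 16, (((sumZ2 x) ^ 2 : ℕ) : ℝ) = 1331200 := by
  rw [← Nat.cast_sum, show (∑ x : Fin 16, (sumZ2 x) ^ 2) = 1331200 from by decide]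
  norm_num

/-- With `X` and `M` independent and uniform on `𝔽₁₆` and `C = 1`: first-order protection
holds, `E(Z | X = x) = E(Z)` for every `x` (equivalently `Var(E(Z|X)) = 0`), but
`Var(E(Z²|X)) = 1 ≠ 0`: the HCI order is `K = 2`. Conditional expectations given `X = x`
are averages over the uniform mask `M`, and the outer expectations/variance are averages
over the uniform `X`. -/
theorem masking_F16_C1_HCI_order_two :
    (∀ x : Fin 16,
        (∑ m : Fin 16, leakZ x m) / 16
          = (∑ x' : Fin 16, ∑ m : Fin 16, leakZ x' m) / 256)
      ∧ (∑ x : Fin 16,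
            ((∑ m : Fin 16, leakZ x m) / 16
              - (∑ x' : Fin 16, ∑ m : Fin 16, leakZ x' m) / 256) ^ 2) / 16 = 0
      ∧ (∑ x : Fin 16,
            ((∑ m : Fin 16, (leakZ x m) ^ 2) / 16
              - (∑ x' : Fin 16, ∑ m : Fin 16, (leakZ x' m) ^ 2) / 256) ^ 2) / 16 = 1 := by
  refine ⟨fun x => by simp only [sum_leakZ]; norm_num, ?_, ?_⟩
  · simp only [sum_leakZ]; norm_num
  · simp only [sum_leakZ2, sumA]
    have key : ∑ x : Fin 16, (((sumZ2 x : ℕ) : ℝ) / 16 - 4608 / 256) ^ 2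
        = (∑ x : Fin 16, (((sumZ2 x) ^ 2 : ℕ) : ℝ)) / 256
          - 9 / 4 * (∑ x : Fin 16, ((sumZ2 x : ℕ) : ℝ))
          + ∑ _x : Fin 16, (324 : ℝ) := by
      rw [Finset.sum_div, Finset.mul_sum, ← Finset.sum_sub_distrib, ← Finset.sum_add_distrib]
      exact Finset.sum_congr rfl fun x _ => by push_cast; ring
    rw [key, sumA, sumB]
    norm_num
end
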